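/- arXiv:math/0211391 — 5 statements merged into one kernel-verified Lean document; each statement's English description precedes it below -/
import Mathlib

section
/- Let Γ be a finite subgroup of the torus (S¹)ⁿ ⊂ ℂⁿ and let y₁,…,yₙ ≥ 0 be nonnegative reals. Define Todd(a, z) = z/(1 − a·e^{−z}) (interpreted via its limit value 1 when a = 1 and z = 0, and 0 when a ≠ 1 and z = 0). Then the sum over a = (a₁,…,aₙ) ∈ Γ of the products ∏_{j=1}^n Todd(aⱼ, yⱼ) is a strictly positive real number. -/
/-- The Todd function `Todd(a, y) = y / (1 - a e^{-y})`, with the degenerate values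
`Todd(1, 0) = 1` and `Todd(a, 0) = 0` for `a ≠ 1`. -/
noncomputable def ToddFn (a : ℂ) (y : ℝ) : ℂ :=
  if y = 0 then (if a = 1 then 1 else 0)
  else (y : ℂ) / (1 - a * Complex.exp (-(y : ℂ)))

/-
If `a ^ N = 1` and `y > 0`, put `z = a e^{-y}`; then `z ^ N = e^{-N y}` is real, and
`1 / (1 - z) = (∑_{k<N} z^k) / (1 - z^N)` writes `Todd(a, y)` as the positive number
`Todd(1, N y) / N` times `∑_{k<N} a^k e^{-k y}` (also for `y = 0`). Taking `N = |Γ|` and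
expanding the product over `j`, the sum over `Γ` becomes a combination of the character sums
`∑_{a ∈ Γ} ∏_j a_j^{k_j}` with positive coefficients. Each character sum is `|Γ|` or `0`, and the
trivial character `k = 0` contributes `|Γ| > 0`. Positivity is phrased in the order `ComplexOrder`
on `ℂ`, where `0 < z` means that `z` is a positive real.
-/

open Finset
open scoped ComplexOrder

lemma toddFn_one_pos {t : ℝ} (ht : 0 ≤ t) : 0 < ToddFn 1 t := by
  rcases ht.eq_or_lt with rfl | ht
  · simp [ToddFn]
  · have hexp : Real.exp (-t) < 1 := Real.exp_lt_one_iff.2 (neg_neg_of_pos ht)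
    have : ToddFn 1 t = ((t / (1 - Real.exp (-t)) : ℝ) : ℂ) := by
      simp [ToddFn, ht.ne']
    rw [this]
    exact_mod_cast div_pos ht (sub_pos.2 hexp)

lemma geom_sum_eq_zero_of_pow_eq_one {R : Type*} [Ring R] [NoZeroDivisors R] {a : R} {N : ℕ}
    (ha : a ^ N = 1) (ha1 : a ≠ 1) :
    ∑ k ∈ range N, a ^ k = 0 := by
  have h := geom_sum_mul_neg a N
  rw [ha, sub_self, mul_eq_zero] at h
  exact h.resolve_right (sub_ne_zero.2 (Ne.symm ha1))

lemma toddFn_eq_mul_geom_sum {a : ℂ} {N : ℕ} (hN : N ≠ 0) (ha : a ^ N = 1) {y : ℝ} (hy : 0 ≤ y) :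
    ToddFn a y = ToddFn 1 (N * y) / N * ∑ k ∈ range N, (a * Complex.exp (-y)) ^ k := by
  have hN' : (N : ℂ) ≠ 0 := Nat.cast_ne_zero.2 hN
  rcases hy.eq_or_lt with rfl | hy
  · by_cases ha1 : a = 1
    · simp [ToddFn, ha1, hN']
    · simp [ToddFn, ha1, geom_sum_eq_zero_of_pow_eq_one ha ha1]
  · set z := a * Complex.exp (-y)
    have hzN : z ^ N = Complex.exp (-((N * y : ℝ) : ℂ)) := by
      rw [mul_pow, ha, one_mul, ← Complex.exp_nat_mul]; push_cast; ring_nf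
    have hzN1 : 1 - z ^ N ≠ 0 := by
      have : Real.exp (-(N * y)) < 1 := Real.exp_lt_one_iff.2 (by
        have := mul_pos (Nat.cast_pos.2 (Nat.pos_of_ne_zero hN)) hy; linarith)
      rw [hzN, ← Complex.ofReal_neg, ← Complex.ofReal_exp]
      exact_mod_cast (sub_pos.2 this).ne'
    have hgeom := geom_sum_mul_neg z N
    have hNy : (N : ℝ) * y ≠ 0 := mul_ne_zero (Nat.cast_ne_zero.2 hN) hy.ne'
    have hS : ∑ k ∈ range N, z ^ k ≠ 0 := left_ne_zero_of_mul (hgeom ▸ hzN1)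
    have hz1 : 1 - z ≠ 0 := right_ne_zero_of_mul (hgeom ▸ hzN1)
    simp only [ToddFn, hy.ne', hNy, if_false, one_mul]
    rw [show a * Complex.exp (-y) = z from rfl, ← hzN, ← hgeom]
    push_cast
    field_simp

lemma sum_monoidHom_nonneg {G : Type*} [Group G] [Fintype G] (f : G →* ℂ) : 0 ≤ ∑ g, f g := by
  classical
  rw [sum_hom_units]
  split_ifs <;> positivity

section Torus

variable {ι : Type*}

lemma coe_apply_pow_natCard (Γ : Subgroup (ι → Circle)) (a : Γ) (j : ι) :
    ((a : ι → Circle) j : ℂ) ^ Nat.card Γ = 1 := by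
  have h : (a : ι → Circle) ^ Nat.card Γ = 1 := by
    rw [← SubgroupClass.coe_pow, pow_card_eq_one', OneMemClass.coe_one]
  rw [← Circle.coe_pow, ← Pi.pow_apply, h, Pi.one_apply, Circle.coe_one]

variable [Fintype ι]

def torusCharacter (k : ι → ℕ) : (ι → Circle) →* ℂ where
  toFun a := ∏ j, (a j : ℂ) ^ k j
  map_one' := by simp
  map_mul' a b := by simp [mul_pow, prod_mul_distrib]

lemma prod_toddFn_eq [DecidableEq ι] (Γ : Subgroup (ι → Circle)) [Finite Γ] (a : Γ) {y : ι → ℝ}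
    (hy : ∀ j, 0 ≤ y j) :
    ∏ j, ToddFn ((a : ι → Circle) j) (y j) =
      (∏ j, ToddFn 1 (Nat.card Γ * y j) / Nat.card Γ) *
        ∑ k ∈ Fintype.piFinset fun _ => range (Nat.card Γ),
          torusCharacter k a * ∏ j, Complex.exp (-y j) ^ k j := by
  rw [prod_congr rfl fun j _ =>
      toddFn_eq_mul_geom_sum Nat.card_pos.ne' (coe_apply_pow_natCard Γ a j) (hy j),
    prod_mul_distrib, prod_univ_sum]
  simp [torusCharacter, mul_pow, prod_mul_distrib]

theorem sum_prod_toddFn_pos (Γ : Subgroup (ι → Circle)) [Fintype Γ] {y : ι → ℝ}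
    (hy : ∀ j, 0 ≤ y j) :
    0 < ∑ a : Γ, ∏ j, ToddFn ((a : ι → Circle) j) (y j) := by
  classical
  have hexp : ∀ j, 0 < Complex.exp (-y j) := fun j => by
    rw [← Complex.ofReal_neg, ← Complex.ofReal_exp]; exact_mod_cast Real.exp_pos _
  simp_rw [prod_toddFn_eq Γ _ hy, ← mul_sum]
  rw [sum_comm]
  refine mul_pos (prod_pos fun j _ => div_pos (toddFn_one_pos ?_) ?_) (sum_pos' ?_ ?_)
  · exact mul_nonneg (Nat.cast_nonneg _) (hy j)
  · exact_mod_cast Nat.card_pos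
  · intro k _
    rw [← sum_mul]
    exact mul_nonneg (sum_monoidHom_nonneg ((torusCharacter k).comp Γ.subtype))
      (prod_nonneg fun j _ => pow_nonneg (hexp j).le _)
  · refine ⟨0, by simp [Fintype.card_pos], ?_⟩
    simpa [torusCharacter] using Fintype.card_pos

end Torus

/-- For a finite subgroup `Γ` of the torus `(S¹)ⁿ` and nonnegative reals
`y₁, …, yₙ`, the sum `∑_{a ∈ Γ} ∏_j Todd(aⱼ, yⱼ)` is a strictly positive real number. -/
theorem todd_sum_pos (n : ℕ) (Γ : Subgroup (Fin n → Circle)) [Fintype Γ]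
    (y : Fin n → ℝ) (hy : ∀ j, 0 ≤ y j) :
    (∑ a : Γ, ∏ j, ToddFn ((a : Fin n → Circle) j : ℂ) (y j)).im = 0 ∧
    0 < (∑ a : Γ, ∏ j, ToddFn ((a : Fin n → Circle) j : ℂ) (y j)).re := by
  obtain ⟨hre, him⟩ := Complex.pos_iff.1 (sum_prod_toddFn_pos Γ hy)
  exact ⟨him.symm, hre⟩
end

section
/- Let F(q) be a convergent power series in k complex variables on a domain Ω containing 0, and let G(h) be a polynomial in k variables. Then for q ∈ Ω and h ∈ ℂᵏ, one has F(∂/∂h)[G(h)·exp(∑_{j=1}^k qⱼhⱼ)] = G(∂/∂q)[F(q)·exp(∑_{j=1}^k qⱼhⱼ)], i.e., applying the infinite-order differential operator F(∂/∂h) to G(h)e^{⟨q,h⟩} and evaluating gives the same result as applying G(∂/∂q) to F(q)e^{⟨q,h⟩}. -/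
/-- Partial derivative of a function of `k` complex variables in the `j`-th coordinate
direction. -/
noncomputable def pderivC {k : ℕ} (j : Fin k) (f : (Fin k → ℂ) → ℂ) : (Fin k → ℂ) → ℂ :=
  fun x => fderiv ℂ f x (Pi.single j 1)

/-- Iterated partial derivative `∂^β = ∂^{β₁}/∂x₁^{β₁} ⋯ ∂^{βₖ}/∂xₖ^{βₖ}` indexed by a
multi-index `β`. -/
noncomputable def mderivC {k : ℕ} (β : Fin k → ℕ) (f : (Fin k → ℂ) → ℂ) : (Fin k → ℂ) → ℂ :=
  (List.finRange k).foldr (fun j g => (pderivC j)^[β j] g) f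

/-!
Expand both sides over monomials. Writing `E a n β` for `∂_zⁿ (z^β e^{⟨a,z⟩})`, one has
`E q β α h = E h α β q`: both are the mixed derivative `∂_qᵅ ∂_hᵝ e^{⟨q,h⟩}`, and the Leibniz
formulas for the two sides agree term by term. Hence the left side is
`∑_α g_α ∑_β c_β E h α β q`, and it remains to differentiate `F(q) e^{⟨q,h⟩} = ∑_β c_β E h 0 β q`
term by term in `q`. This is legitimate because, by Abel's lemma at a point of `Ω` beyond `q` in
every coordinate, all the differentiated series are dominated near `q` by
`‖c_β‖ · (polynomial in β) · r^β` for a polydisc radius `r` at which these are summable.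
-/

open Finset Filter Topology Complex

noncomputable def expMonomial (s : ℂ) (m : ℕ) (t : ℂ) : ℂ := t ^ m * exp (s * t)

theorem contDiff_expMonomial (s : ℂ) (m : ℕ) : ContDiff ℂ ⊤ (expMonomial s m) := by
  unfold expMonomial; fun_prop

theorem iteratedDeriv_expMonomial (s : ℂ) (n m : ℕ) (t : ℂ) :
    iteratedDeriv n (expMonomial s m) t =
      ∑ i ∈ range (n + 1), (n.choose i * m.descFactorial i : ℂ) * (t ^ (m - i) * s ^ (n - i))
        * exp (s * t) := by
  have : expMonomial s m = (· ^ m) * fun t => exp (s * t) := rfl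
  rw [this, iteratedDeriv_mul (by fun_prop) (by fun_prop)]
  simp only [iteratedDeriv_pow, iteratedDeriv_cexp_const_mul]
  exact sum_congr rfl fun i _ => by ring

theorem sum_range_choose_mul_descFactorial_of_lt (n m N : ℕ) (hN : n < N) (f : ℕ → ℂ) :
    ∑ i ∈ range (n + 1), (n.choose i * m.descFactorial i : ℂ) * f i =
      ∑ i ∈ range N, (n.choose i * m.descFactorial i : ℂ) * f i := by
  refine sum_subset (range_subset_range.mpr hN) fun i _ hi => ?_
  simp [Nat.choose_eq_zero_of_lt (by simpa using hi : n < i)]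

theorem choose_mul_descFactorial_comm (n m i : ℕ) :
    n.choose i * m.descFactorial i = m.choose i * n.descFactorial i := by
  rw [Nat.descFactorial_eq_factorial_mul_choose, Nat.descFactorial_eq_factorial_mul_choose]
  ring

/-- Both sides are `∂ₛᵐ ∂ₜⁿ e^{st}`. -/
theorem iteratedDeriv_expMonomial_comm (s t : ℂ) (n m : ℕ) :
    iteratedDeriv n (expMonomial s m) t = iteratedDeriv m (expMonomial t n) s := by
  rw [iteratedDeriv_expMonomial, iteratedDeriv_expMonomial, mul_comm t s, ← sum_mul, ← sum_mul,
    sum_range_choose_mul_descFactorial_of_lt n m (n + m + 1) (by omega),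
    sum_range_choose_mul_descFactorial_of_lt m n (n + m + 1) (by omega)]
  congr 1
  refine sum_congr rfl fun i _ => ?_
  rw [mul_comm (t ^ _), ← Nat.cast_mul, ← Nat.cast_mul, choose_mul_descFactorial_comm]

theorem differentiable_iteratedDeriv_expMonomial (s : ℂ) (n m : ℕ) :
    Differentiable ℂ (iteratedDeriv n (expMonomial s m)) :=
  (contDiff_expMonomial s m).differentiable_iteratedDeriv n (WithTop.coe_lt_top _)

theorem hasDerivAt_iteratedDeriv_expMonomial (s : ℂ) (n m : ℕ) (t : ℂ) :
    HasDerivAt (iteratedDeriv n (expMonomial s m))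
      (iteratedDeriv (n + 1) (expMonomial s m) t) t := by
  rw [iteratedDeriv_succ]
  exact (differentiable_iteratedDeriv_expMonomial s n m t).hasDerivAt

theorem descFactorial_mul_pow_le {r x : ℝ} (hr : 0 < r) (hx0 : 0 ≤ x) (hx : x ≤ r) (m i : ℕ) :
    m.descFactorial i * x ^ (m - i) ≤ (m * r⁻¹) ^ i * r ^ m := by
  rcases le_or_gt i m with him | him
  · calc (m.descFactorial i : ℝ) * x ^ (m - i) ≤ m ^ i * r ^ (m - i) := by
          gcongr
          exact_mod_cast Nat.descFactorial_le_pow m i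
      _ = (m * r⁻¹) ^ i * r ^ m := by
          rw [pow_sub₀ _ hr.ne' him, mul_pow, inv_pow]; ring
  · rw [Nat.descFactorial_eq_zero_iff_lt.mpr him, Nat.cast_zero, zero_mul]
    positivity

theorem norm_iteratedDeriv_expMonomial_le {r : ℝ} (hr : 0 < r) (s : ℂ) (n m : ℕ) {t : ℂ}
    (ht : ‖t‖ ≤ r) :
    ‖iteratedDeriv n (expMonomial s m) t‖ ≤ (m * r⁻¹ + ‖s‖) ^ n * r ^ m * Real.exp (‖s‖ * r) := by
  have hexp : ‖exp (s * t)‖ ≤ Real.exp (‖s‖ * r) := by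
    calc ‖exp (s * t)‖ ≤ Real.exp ‖s * t‖ := norm_exp_le_exp_norm _
      _ ≤ Real.exp (‖s‖ * r) := by rw [norm_mul]; gcongr
  rw [iteratedDeriv_expMonomial, ← sum_mul, norm_mul, add_pow, sum_mul]
  refine mul_le_mul ((norm_sum_le _ _).trans (sum_le_sum fun i _ => ?_)) hexp (norm_nonneg _)
    (by positivity)
  calc _ = n.choose i * (m.descFactorial i * ‖t‖ ^ (m - i)) * ‖s‖ ^ (n - i) := by
        simp only [norm_mul, norm_pow, Complex.norm_natCast]; ring
    _ ≤ n.choose i * ((m * r⁻¹) ^ i * r ^ m) * ‖s‖ ^ (n - i) := by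
        gcongr _ * ?_ * _; exact descFactorial_mul_pow_le hr (norm_nonneg t) ht m i
    _ = _ := by ring

theorem summable_pi_prod_of_nonneg {α : Type*} :
    ∀ {k : ℕ} (a : Fin k → α → ℝ), (∀ j x, 0 ≤ a j x) → (∀ j, Summable (a j)) →
      Summable fun β : Fin k → α => ∏ j, a j (β j)
  | 0, _, _, _ => by simpa using (Summable.of_finite : Summable fun _ : Fin 0 → α => (1 : ℝ))
  | k + 1, a, ha0, ha => by
    have htail :=
      summable_pi_prod_of_nonneg (fun j => a j.succ) (fun j => ha0 j.succ) (fun j => ha j.succ)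
    have hpair := (ha 0).mul_of_nonneg htail (ha0 0) fun β => prod_nonneg fun j _ => ha0 j.succ _
    rw [← (Fin.consEquiv fun _ => α).summable_iff]
    simpa [Function.comp_def, Fin.prod_univ_succ] using hpair

theorem summable_mul_add_pow_mul_geometric {ρ : ℝ} (hρ0 : 0 ≤ ρ) (hρ1 : ρ < 1) (a b : ℝ) (n : ℕ) :
    Summable fun m : ℕ => (m * b + a) ^ n * ρ ^ m := by
  simp_rw [add_pow, sum_mul]
  refine summable_sum fun i _ => ?_
  have := (summable_pow_mul_geometric_of_norm_lt_one i
    (by rwa [Real.norm_of_nonneg hρ0] : ‖ρ‖ < 1)).mul_left (b ^ i * a ^ (n - i) * n.choose i)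
  exact this.congr fun m => by ring

/-- Abel's lemma for multiple power series, with room for polynomial weights. -/
theorem summable_norm_mul_prod_of_summable {k : ℕ} {c : (Fin k → ℕ) → ℂ} {w : Fin k → ℂ}
    (hw : Summable fun β => c β * ∏ j, w j ^ β j) {r : Fin k → ℝ} (hr0 : ∀ j, 0 ≤ r j)
    (hrw : ∀ j, r j < ‖w j‖) {a b : Fin k → ℝ} (ha : ∀ j, 0 ≤ a j) (hb : ∀ j, 0 ≤ b j)
    (n : Fin k → ℕ) :
    Summable fun β => ‖c β‖ * ∏ j, (β j * b j + a j) ^ n j * r j ^ β j := by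
  obtain ⟨M, hM⟩ := hw.tendsto_cofinite_zero.norm.bddAbove_range_of_cofinite
  have hw0 : ∀ j, 0 < ‖w j‖ := fun j => (hr0 j).trans_lt (hrw j)
  have hweight0 : ∀ j (m : ℕ) (x : ℝ), 0 ≤ x → 0 ≤ (m * b j + a j) ^ n j * x ^ m :=
    fun j m x hx => by have := ha j; have := hb j; positivity
  have hweights :
      Summable fun β : Fin k → ℕ => ∏ j, (β j * b j + a j) ^ n j * (r j / ‖w j‖) ^ β j :=
    summable_pi_prod_of_nonneg (fun j (m : ℕ) => (m * b j + a j) ^ n j * (r j / ‖w j‖) ^ m)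
      (fun j m => hweight0 j m _ (div_nonneg (hr0 j) (hw0 j).le))
      fun j => summable_mul_add_pow_mul_geometric (div_nonneg (hr0 j) (hw0 j).le)
        ((div_lt_one (hw0 j)).mpr (hrw j)) _ _ _
  refine (hweights.mul_left M).of_nonneg_of_le
    (fun β => mul_nonneg (norm_nonneg _) (prod_nonneg fun j _ => hweight0 j _ _ (hr0 j)))
    fun β => ?_
  calc ‖c β‖ * ∏ j, (β j * b j + a j) ^ n j * r j ^ β j
      = ‖c β * ∏ j, w j ^ β j‖ * ∏ j, (β j * b j + a j) ^ n j * (r j / ‖w j‖) ^ β j := by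
        rw [norm_mul, norm_prod, mul_assoc, ← prod_mul_distrib]
        congr 1
        refine prod_congr rfl fun j _ => ?_
        rw [norm_pow, div_pow]
        field_simp [(hw0 j).ne']
    _ ≤ M * ∏ j, (β j * b j + a j) ^ n j * (r j / ‖w j‖) ^ β j := by
        gcongr
        · exact prod_nonneg fun j _ => hweight0 j _ _ (div_nonneg (hr0 j) (hw0 j).le)
        · exact hM ⟨β, rfl⟩

theorem exists_mem_forall_norm_lt {ι : Type*} {q : ι → ℂ} {Ω : Set (ι → ℂ)} (hΩ : Ω ∈ 𝓝 q) :
    ∃ w ∈ Ω, ∀ j, ‖q j‖ < ‖w j‖ := by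
  classical
  let v : ι → ℂ := fun j => if q j = 0 then 1 else q j
  have hline : Tendsto (fun t : ℝ => q + t • v) (𝓝[>] 0) (𝓝 q) :=
    (Continuous.tendsto' (by fun_prop) 0 q (by simp)).mono_left nhdsWithin_le_nhds
  obtain ⟨t, htΩ, ht : 0 < t⟩ := ((hline.eventually hΩ).and self_mem_nhdsWithin).exists
  refine ⟨q + t • v, htΩ, fun j => ?_⟩
  by_cases hqj : q j = 0
  · simp [v, hqj, ht.ne']
  · have : (q + t • v) j = (1 + t) • q j := by simp [v, hqj, add_smul]
    rw [this, norm_smul, Real.norm_of_nonneg (by positivity)]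
    have := norm_pos_iff.mpr hqj
    nlinarith

section PartialDerivatives

variable {k : ℕ}

theorem mderivC_induction {R : (Fin k → ℕ) → ((Fin k → ℂ) → ℂ) → Prop}
    (step : ∀ j n f, R n f → R (n + Pi.single j 1) (pderivC j f)) {f : (Fin k → ℂ) → ℂ}
    (hf : R 0 f) (β : Fin k → ℕ) : R β (mderivC β f) := by
  have iterate : ∀ j m n f, R n f → R (n + Pi.single j m) ((pderivC j)^[m] f) := by
    intro j m
    induction m with
    | zero => simp
    | succ m ih =>
      intro n f hnf
      rw [Function.iterate_succ_apply', Pi.single_add, ← add_assoc]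
      exact step j _ _ (ih n f hnf)
  have fold : ∀ L : List (Fin k),
      R (L.map fun j => Pi.single j (β j)).sum (L.foldr (fun j g => (pderivC j)^[β j] g) f) := by
    intro L
    induction L with
    | nil => exact hf
    | cons j L ih =>
      rw [List.map_cons, List.sum_cons, add_comm]
      exact iterate j _ _ _ ih
  simpa [mderivC, ← Fin.sum_univ_def, Finset.univ_sum_single] using fold (List.finRange k)

theorem mderivC_eq_of_pderivC {φ : (Fin k → ℕ) → (Fin k → ℂ) → ℂ}
    (hφ : ∀ j n, pderivC j (φ n) = φ (n + Pi.single j 1)) (β : Fin k → ℕ) :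
    mderivC β (φ 0) = φ β :=
  mderivC_induction (R := fun n f => f = φ n) (by rintro j n f rfl; exact hφ j n) rfl β

theorem pderivC_const_mul {f : (Fin k → ℂ) → ℂ} {z : Fin k → ℂ} (hf : DifferentiableAt ℂ f z)
    (a : ℂ) (j : Fin k) : pderivC j (fun z => a * f z) z = a * pderivC j f z := by
  simp [pderivC, fderiv_const_mul hf]

theorem pderivC_finset_sum {ι : Type*} {s : Finset ι} {f : ι → (Fin k → ℂ) → ℂ} {z : Fin k → ℂ}
    (hf : ∀ i ∈ s, DifferentiableAt ℂ (f i) z) (j : Fin k) :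
    pderivC j (fun z => ∑ i ∈ s, f i z) z = ∑ i ∈ s, pderivC j (f i) z := by
  simp [pderivC, fderiv_fun_sum hf]

theorem pderivC_prod {φ φ' : Fin k → ℂ → ℂ} (hφ : ∀ i t, HasDerivAt (φ i) (φ' i t) t)
    (j : Fin k) (z : Fin k → ℂ) :
    pderivC j (fun z => ∏ i, φ i (z i)) z = ∏ i, Function.update φ j (φ' j) i (z i) := by
  classical
  have hcoord : ∀ i, HasFDerivAt (fun z : Fin k → ℂ => φ i (z i))
      (φ' i (z i) • (ContinuousLinearMap.proj i : (Fin k → ℂ) →L[ℂ] ℂ)) z :=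
    fun i => (hφ i (z i)).comp_hasFDerivAt z (hasFDerivAt_apply i z)
  have hprod := HasFDerivAt.finsetProd (u := univ) fun i _ => hcoord i
  rw [pderivC, hprod.fderiv, _root_.sum_apply,
    sum_eq_single j (fun i _ hij => by simp [Pi.single_eq_of_ne hij]) (by simp),
    ← mul_prod_erase univ _ (mem_univ j), Function.update_self]
  simp only [smul_apply, ContinuousLinearMap.proj_apply, Pi.single_eq_same, smul_eq_mul, mul_one]
  rw [mul_comm]
  exact congrArg _ (prod_congr rfl fun i hi => by rw [Function.update_of_ne (ne_of_mem_erase hi)])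

theorem ContinuousLinearMap.norm_le_sum_norm_apply_single {ι 𝕜 F : Type*} [Fintype ι]
    [DecidableEq ι] [NontriviallyNormedField 𝕜] [NormedAddCommGroup F] [NormedSpace 𝕜 F]
    (T : (ι → 𝕜) →L[𝕜] F) : ‖T‖ ≤ ∑ i, ‖T (Pi.single i 1)‖ := by
  refine T.opNorm_le_bound (sum_nonneg fun i _ => norm_nonneg _) fun x => ?_
  calc ‖T x‖ = ‖∑ i, x i • T (Pi.single i 1)‖ := by
        conv_lhs => rw [pi_eq_sum_univ' x, map_sum]
        simp only [map_smul]
    _ ≤ ∑ i, ‖x i‖ * ‖T (Pi.single i 1)‖ := (norm_sum_le _ _).trans (by simp [norm_smul])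
    _ ≤ ∑ i, ‖x‖ * ‖T (Pi.single i 1)‖ := by gcongr; exact norm_le_pi_norm x _
    _ = _ := by rw [mul_comm, mul_sum]

theorem norm_fderiv_le_sum_norm_pderivC (f : (Fin k → ℂ) → ℂ) (z : Fin k → ℂ) :
    ‖fderiv ℂ f z‖ ≤ ∑ j, ‖pderivC j f z‖ :=
  (fderiv ℂ f z).norm_le_sum_norm_apply_single

theorem hasSum_pderivC {ι : Type*} {U : Set (Fin k → ℂ)} (hU : IsOpen U) (hU' : IsPreconnected U)
    {f : ι → (Fin k → ℂ) → ℂ} {F : (Fin k → ℂ) → ℂ} {u : ι → ℝ}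
    (hf : ∀ i, Differentiable ℂ (f i)) (hu : Summable u)
    (hfu : ∀ i, ∀ z ∈ U, ‖fderiv ℂ (f i) z‖ ≤ u i) (hF : ∀ z ∈ U, HasSum (fun i => f i z) (F z))
    (j : Fin k) {z : Fin k → ℂ} (hz : z ∈ U) :
    HasSum (fun i => pderivC j (f i) z) (pderivC j F z) := by
  have hderiv := hasFDerivAt_tsum_of_isPreconnected hu hU hU'
    (fun i y _ => (hf i y).hasFDerivAt) hfu hz (hF z hz).summable hz
  have hFeq : F =ᶠ[𝓝 z] fun y => ∑' i, f i y :=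
    eventually_of_mem (hU.mem_nhds hz) fun y hy => (hF y hy).tsum_eq.symm
  have hsum : Summable fun i => fderiv ℂ (f i) z :=
    .of_norm_bounded hu fun i => hfu i z hz
  rw [pderivC, hFeq.fderiv_eq, hderiv.fderiv]
  exact hsum.hasSum.mapL (ContinuousLinearMap.apply ℂ ℂ (Pi.single j 1))

theorem hasSum_mderivC {ι : Type*} {U : Set (Fin k → ℂ)} (hU : IsOpen U) (hU' : IsPreconnected U)
    {f : (Fin k → ℕ) → ι → (Fin k → ℂ) → ℂ} {F : (Fin k → ℂ) → ℂ}
    (hf : ∀ n i, Differentiable ℂ (f n i))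
    (hpderiv : ∀ j n i, pderivC j (f n i) = f (n + Pi.single j 1) i)
    (hbound : ∀ n, ∃ u : ι → ℝ, Summable u ∧ ∀ i, ∀ z ∈ U, ‖f n i z‖ ≤ u i)
    (hF : ∀ z ∈ U, HasSum (fun i => f 0 i z) (F z)) (β : Fin k → ℕ) {z : Fin k → ℂ}
    (hz : z ∈ U) : HasSum (fun i => f β i z) (mderivC β F z) := by
  refine mderivC_induction (R := fun n G => ∀ z ∈ U, HasSum (fun i => f n i z) (G z))
    (fun j n G hG y hy => ?_) hF β z hz
  choose u hu hfu using hbound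
  have hfderiv : ∀ i, ∀ y ∈ U, ‖fderiv ℂ (f n i) y‖ ≤ ∑ l, u (n + Pi.single l 1) i := fun i y hy =>
    (norm_fderiv_le_sum_norm_pderivC _ y).trans
      (sum_le_sum fun l _ => by rw [hpderiv]; exact hfu _ i y hy)
  simpa only [hpderiv] using
    hasSum_pderivC hU hU' (hf n) (summable_sum fun l _ => hu _) hfderiv hG j hy

end PartialDerivatives

section ExpMonomials

variable {k : ℕ}

/-- `expMonomialDeriv a n β = ∂_zⁿ (z^β e^{⟨a, z⟩})`, computed coordinate by coordinate. -/
noncomputable def expMonomialDeriv (a : Fin k → ℂ) (n β : Fin k → ℕ) (z : Fin k → ℂ) : ℂ :=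
  ∏ j, iteratedDeriv (n j) (expMonomial (a j) (β j)) (z j)

theorem expMonomialDeriv_zero (a : Fin k → ℂ) (β : Fin k → ℕ) (z : Fin k → ℂ) :
    expMonomialDeriv a 0 β z = (∏ j, z j ^ β j) * exp (∑ j, a j * z j) := by
  simp [expMonomialDeriv, expMonomial, prod_mul_distrib, exp_sum]

theorem expMonomialDeriv_comm (a z : Fin k → ℂ) (n β : Fin k → ℕ) :
    expMonomialDeriv a n β z = expMonomialDeriv z β n a :=
  prod_congr rfl fun _ _ => iteratedDeriv_expMonomial_comm _ _ _ _

theorem pderivC_expMonomialDeriv (a : Fin k → ℂ) (n β : Fin k → ℕ) (j : Fin k) :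
    pderivC j (expMonomialDeriv a n β) = expMonomialDeriv a (n + Pi.single j 1) β := by
  funext z
  unfold expMonomialDeriv
  rw [pderivC_prod fun i => hasDerivAt_iteratedDeriv_expMonomial _ _ _]
  refine prod_congr rfl fun i _ => ?_
  rcases eq_or_ne i j with rfl | hij
  · simp
  · simp [hij]

theorem differentiable_expMonomialDeriv (a : Fin k → ℂ) (n β : Fin k → ℕ) :
    Differentiable ℂ (expMonomialDeriv a n β) := by
  unfold expMonomialDeriv
  have := differentiable_iteratedDeriv_expMonomial
  fun_prop

theorem pderivC_const_mul_expMonomialDeriv (a : Fin k → ℂ) (b : ℂ) (n β : Fin k → ℕ)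
    (j : Fin k) :
    pderivC j (fun z => b * expMonomialDeriv a n β z) =
      fun z => b * expMonomialDeriv a (n + Pi.single j 1) β z := by
  funext z
  rw [pderivC_const_mul (differentiable_expMonomialDeriv a n β z), pderivC_expMonomialDeriv]

theorem mderivC_sum_mul_expMonomialDeriv {ι : Type*} (s : Finset ι) (a : Fin k → ℂ)
    (b : ι → ℂ) (P : ι → Fin k → ℕ) (β : Fin k → ℕ) :
    mderivC β (fun z => ∑ i ∈ s, b i * expMonomialDeriv a 0 (P i) z) =
      fun z => ∑ i ∈ s, b i * expMonomialDeriv a β (P i) z := by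
  refine mderivC_eq_of_pderivC (φ := fun n z => ∑ i ∈ s, b i * expMonomialDeriv a n (P i) z)
    (fun j n => funext fun z => ?_) β
  rw [pderivC_finset_sum fun i _ => ((differentiable_expMonomialDeriv a n (P i)).const_mul _) z]
  exact sum_congr rfl fun i _ => congrFun (pderivC_const_mul_expMonomialDeriv a _ n _ j) z

theorem norm_expMonomialDeriv_le {r : Fin k → ℝ} (hr : ∀ j, 0 < r j) (a : Fin k → ℂ)
    (n β : Fin k → ℕ) {z : Fin k → ℂ} (hz : ∀ j, ‖z j‖ ≤ r j) :
    ‖expMonomialDeriv a n β z‖ ≤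
      (∏ j, (β j * (r j)⁻¹ + ‖a j‖) ^ n j * r j ^ β j) * Real.exp (∑ j, ‖a j‖ * r j) := by
  rw [expMonomialDeriv, norm_prod, Real.exp_sum, ← prod_mul_distrib]
  exact prod_le_prod (fun j _ => norm_nonneg _) fun j _ =>
    norm_iteratedDeriv_expMonomial_le (hr j) _ _ _ (hz j)

end ExpMonomials

theorem hasSum_mderivC_mul_exp {k : ℕ} {Ω : Set (Fin k → ℂ)} (hΩ : IsOpen Ω)
    {c : (Fin k → ℕ) → ℂ} {F : (Fin k → ℂ) → ℂ}
    (hF : ∀ z ∈ Ω, HasSum (fun β => c β * ∏ j, z j ^ β j) (F z)) {q : Fin k → ℂ} (hq : q ∈ Ω)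
    (h : Fin k → ℂ) (α : Fin k → ℕ) :
    HasSum (fun β => c β * expMonomialDeriv h α β q)
      (mderivC α (fun z => F z * exp (∑ j, z j * h j)) q) := by
  obtain ⟨w, hwΩ, hqw⟩ := exists_mem_forall_norm_lt (hΩ.mem_nhds hq)
  set r : Fin k → ℝ := fun j => (‖q j‖ + ‖w j‖) / 2
  have hr : ∀ j, 0 < r j := fun j => by simp only [r]; linarith [hqw j, norm_nonneg (q j)]
  have hpolydisc : IsOpen {z : Fin k → ℂ | ∀ j, ‖z j‖ < r j} := by
    simp only [Set.ofPred_forall]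
    exact isOpen_iInter_of_finite fun j => isOpen_lt (by fun_prop) continuous_const
  obtain ⟨ε, hε, hball⟩ := Metric.isOpen_iff.mp (hΩ.inter hpolydisc) q
    ⟨hq, fun j => by simp only [r]; linarith [hqw j]⟩
  have hmajorant := summable_norm_mul_prod_of_summable (hF w hwΩ).summable (fun j => (hr j).le)
    (fun j => by simp only [r]; linarith [hqw j]) (a := fun j => ‖h j‖) (b := fun j => (r j)⁻¹)
    (fun j => norm_nonneg _) (fun j => (inv_pos.mpr (hr j)).le)
  refine hasSum_mderivC Metric.isOpen_ball (convex_ball q ε).isPreconnected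
    (f := fun n β z => c β * expMonomialDeriv h n β z)
    (fun n β => (differentiable_expMonomialDeriv h n β).const_mul (c β))
    (fun j n β => pderivC_const_mul_expMonomialDeriv h (c β) n β j)
    (fun n => ⟨_, (hmajorant n).mul_left (Real.exp (∑ j, ‖h j‖ * r j)), fun β z hz => ?_⟩)
    (fun z hz => ?_) α (Metric.mem_ball_self hε)
  · rw [norm_mul]
    refine (mul_le_mul_of_nonneg_left (norm_expMonomialDeriv_le hr h n β
      fun j => ((hball hz).2 j).le) (norm_nonneg _)).trans_eq ?_
    ring
  · simpa [expMonomialDeriv_zero, mul_comm, mul_assoc, mul_left_comm] using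
      (hF z (hball hz).1).mul_right (exp (∑ j, z j * h j))

theorem todd_operator_switch_general (k : ℕ) (Ω : Set (Fin k → ℂ)) (hΩ : IsOpen Ω)
    (c : (Fin k → ℕ) → ℂ) (F : (Fin k → ℂ) → ℂ)
    (hF : ∀ q ∈ Ω, HasSum (fun β => c β * ∏ j, q j ^ β j) (F q))
    (g : (Fin k → ℕ) →₀ ℂ)
    (G : (Fin k → ℂ) → ℂ)
    (hG : ∀ h, G h = ∑ β ∈ g.support, g β * ∏ j, h j ^ β j)
    (q : Fin k → ℂ) (hq : q ∈ Ω) (h : Fin k → ℂ) :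
    (∑' β : Fin k → ℕ,
        c β * mderivC β (fun h' => G h' * Complex.exp (∑ j, q j * h' j)) h) =
      ∑ β ∈ g.support,
        g β * mderivC β (fun q' => F q' * Complex.exp (∑ j, q' j * h j)) q := by
  have hGexp : (fun h' => G h' * exp (∑ j, q j * h' j)) =
      fun z => ∑ α ∈ g.support, g α * expMonomialDeriv q 0 α z := by
    funext z
    simp [hG, sum_mul, expMonomialDeriv_zero, mul_assoc]
  have hderiv (β : Fin k → ℕ) : mderivC β (fun h' => G h' * exp (∑ j, q j * h' j)) =
      fun z => ∑ α ∈ g.support, g α * expMonomialDeriv q β α z := by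
    rw [hGexp]
    exact mderivC_sum_mul_expMonomialDeriv g.support q g (fun α => α) β
  have hseries := fun α => hasSum_mderivC_mul_exp hΩ hF hq h α
  calc ∑' β, c β * mderivC β (fun h' => G h' * exp (∑ j, q j * h' j)) h
      = ∑' β, ∑ α ∈ g.support, g α * (c β * expMonomialDeriv h α β q) := by
        refine tsum_congr fun β => ?_
        simp only [hderiv, mul_sum, expMonomialDeriv_comm q h]
        exact sum_congr rfl fun α _ => by ring
    _ = ∑ α ∈ g.support, g α * ∑' β, c β * expMonomialDeriv h α β q := by
        rw [Summable.tsum_finsetSum fun α _ => ((hseries α).summable.mul_left (g α))]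
        exact sum_congr rfl fun α _ => tsum_mul_left
    _ = _ := sum_congr rfl fun α _ => by rw [(hseries α).tsum_eq]

/-- If `F` is a convergent power series (with coefficients `c`) on a domain
`Ω ∋ 0` and `G` is a polynomial (with finitely supported coefficients `g`), then
`F(∂/∂h)[G(h) e^{⟨q,h⟩}] = G(∂/∂q)[F(q) e^{⟨q,h⟩}]` for `q ∈ Ω`, `h ∈ ℂᵏ`. -/
theorem todd_operator_switch (k : ℕ) (Ω : Set (Fin k → ℂ)) (hΩ : IsOpen Ω)
    (h0 : (0 : Fin k → ℂ) ∈ Ω)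
    (c : (Fin k → ℕ) → ℂ) (F : (Fin k → ℂ) → ℂ)
    (hF : ∀ q ∈ Ω, HasSum (fun β => c β * ∏ j, q j ^ β j) (F q))
    (g : (Fin k → ℕ) →₀ ℂ)
    (G : (Fin k → ℂ) → ℂ)
    (hG : ∀ h, G h = ∑ β ∈ g.support, g β * ∏ j, h j ^ β j)
    (q : Fin k → ℂ) (hq : q ∈ Ω) (h : Fin k → ℂ)
    (hsum : Summable fun β =>
      c β * mderivC β (fun h' => G h' * Complex.exp (∑ j, q j * h' j)) h) :
    (∑' β : Fin k → ℕ,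
        c β * mderivC β (fun h' => G h' * Complex.exp (∑ j, q j * h' j)) h) =
      ∑ β ∈ g.support,
        g β * mderivC β (fun q' => F q' * Complex.exp (∑ j, q' j * h j)) q :=
  todd_operator_switch_general k Ω hΩ c F hF g G hG q hq h
end

section
/- Let m ≥ 1 and for x in the open standard simplex Σ° = {x ∈ ℝᵐ : xⱼ > 0, ∑ xⱼ < 1}, define the m×m matrix A(x) by A(x)_{jk} = 1/(1 − ∑_{l=1}^m x_l) + δ_{jk}/xⱼ. Then A(x) is symmetric positive definite, and moreover all eigenvalues of A(x) are strictly greater than 1. -/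
/-- For `x` in the open standard simplex, the matrix
`A(x)_{jk} = 1/(1 − ∑ x_l) + δ_{jk}/xⱼ` is symmetric positive definite and all of its
eigenvalues are strictly greater than `1`. -/
theorem jacobian_matrix_posdef_eigenvalues_gt_one (m : ℕ) (hm : 1 ≤ m)
    (x : Fin m → ℝ) (hx : ∀ j, 0 < x j) (hsum : ∑ j, x j < 1)
    (A : Matrix (Fin m) (Fin m) ℝ)
    (hA : ∀ j k, A j k = 1 / (1 - ∑ l, x l) + (if j = k then 1 else 0) / x j) :
    A.IsSymm ∧
    (∀ v : Fin m → ℝ, v ≠ 0 → 0 < ∑ j, ∑ k, v j * A j k * v k) ∧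
    (∀ (μ : ℝ) (v : Fin m → ℝ), v ≠ 0 → A.mulVec v = μ • v → 1 < μ) := by
  have hS : (0:ℝ) < 1 - ∑ l, x l := by linarith
  have hxlt : ∀ j, x j < 1 := fun j =>
    lt_of_le_of_lt (Finset.single_le_sum (fun i _ => (hx i).le) (Finset.mem_univ j)) hsum
  -- quadratic form identity
  have hquad : ∀ v : Fin m → ℝ,
      ∑ j, ∑ k, v j * A j k * v k
        = (∑ j, v j)^2 / (1 - ∑ l, x l) + ∑ j, v j^2 / x j := by
    intro v
    have hterm : ∀ j k, v j * A j k * v k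
        = v j * v k / (1 - ∑ l, x l) + (if j = k then v j ^ 2 / x j else 0) := by
      intro j k
      rw [hA]
      by_cases h : j = k
      · subst h; simp only [eq_self_iff_true, if_true]; ring
      · simp only [if_neg h]; ring
    calc ∑ j, ∑ k, v j * A j k * v k
        = ∑ j, ∑ k, (v j * v k / (1 - ∑ l, x l) + (if j = k then v j ^ 2 / x j else 0)) := by
          simp only [hterm]
      _ = (∑ j, ∑ k, v j * v k / (1 - ∑ l, x l)) + ∑ j, v j ^ 2 / x j := by
          rw [← Finset.sum_add_distrib]
          refine Finset.sum_congr rfl fun j _ => ?_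
          rw [Finset.sum_add_distrib]
          congr 1
          simp
      _ = (∑ j, v j)^2 / (1 - ∑ l, x l) + ∑ j, v j ^ 2 / x j := by
          congr 1
          rw [sq, Finset.sum_mul_sum, Finset.sum_div]
          refine Finset.sum_congr rfl fun j _ => ?_
          rw [Finset.sum_div]
  have hquadpos : ∀ v : Fin m → ℝ, v ≠ 0 → 0 < ∑ j, ∑ k, v j * A j k * v k := by
    intro v hv
    obtain ⟨j₀, hj₀⟩ : ∃ j, v j ≠ 0 := by
      by_contra h
      push_neg at h
      exact hv (funext fun j => h j)
    rw [hquad]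
    have h1 : 0 < ∑ j, v j ^ 2 / x j := by
      refine Finset.sum_pos' (fun j _ => div_nonneg (sq_nonneg _) (hx j).le) ⟨j₀, Finset.mem_univ j₀, ?_⟩
      exact div_pos (pow_two_pos_of_ne_zero hj₀) (hx j₀)
    have h2 : 0 ≤ (∑ j, v j)^2 / (1 - ∑ l, x l) := by positivity
    linarith
  refine ⟨?_, hquadpos, ?_⟩
  · ext j k
    rw [Matrix.transpose_apply, hA, hA]
    by_cases h : j = k
    · subst h; rfl
    · simp [h, Ne.symm h]
  · intro μ v hv heig
    obtain ⟨j₀, hj₀⟩ : ∃ j, v j ≠ 0 := by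
      by_contra h
      push_neg at h
      exact hv (funext fun j => h j)
    have hv2 : 0 < ∑ j, v j ^ 2 :=
      Finset.sum_pos' (fun j _ => sq_nonneg _) ⟨j₀, Finset.mem_univ j₀, pow_two_pos_of_ne_zero hj₀⟩
    have h1 : ∑ j, ∑ k, v j * A j k * v k = μ * ∑ j, v j ^ 2 := by
      have : ∀ j, ∑ k, v j * A j k * v k = μ * v j ^ 2 := by
        intro j
        have := congrFun heig j
        rw [Matrix.mulVec, dotProduct] at this
        calc ∑ k, v j * A j k * v k = v j * ∑ k, A j k * v k := by
              rw [Finset.mul_sum]; exact Finset.sum_congr rfl fun k _ => by ring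
          _ = v j * (μ * v j) := by rw [this]; simp [smul_eq_mul]
          _ = μ * v j ^ 2 := by ring
      rw [Finset.sum_congr rfl fun j _ => this j, ← Finset.mul_sum]
    have hgt : ∑ j, v j ^ 2 < ∑ j, ∑ k, v j * A j k * v k := by
      rw [hquad]
      have h3 : ∑ j, v j ^ 2 < ∑ j, v j ^ 2 / x j := by
        refine Finset.sum_lt_sum (fun j _ => ?_) ⟨j₀, Finset.mem_univ j₀, ?_⟩
        · rw [le_div_iff₀ (hx j)]
          nlinarith [sq_nonneg (v j), (hxlt j)]
        · rw [lt_div_iff₀ (hx j₀)]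
          have : 0 < v j₀ ^ 2 := pow_two_pos_of_ne_zero hj₀
          nlinarith [hxlt j₀]
      have h2 : 0 ≤ (∑ j, v j)^2 / (1 - ∑ l, x l) := by positivity
      linarith
    rw [h1] at hgt
    nlinarith
end

section
/- Let Q be a convex polytope contained in the standard unit simplex Σ ⊂ ℝᵐ, with Q not contained in the boundary ∂Σ. Then for each z ∈ (ℂ*)ᵐ there exist unique τ_z ∈ ℝᵐ and x_z ∈ Q such that μ(e^{−τ_z/2}·z) = x_z and τ_z lies in the normal cone to Q at x_z. -/
/-!
Writing `a j = ‖z j‖ ^ 2`, the equation `μ (e^{-τ/2} • z) = x` forces `x` into the open simplex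
and determines `τ j = log a j - log x j + log (1 - ∑ x)`. In homogeneous coordinates
`(1 - ∑ x, x)` on the standard simplex, the normal-cone condition then says exactly that `x`
satisfies the first-order optimality condition on `Q` of the strictly concave function
`∑ i, (-x i * log (x i) + x i * log (a i))` (with weight `1` on the slack coordinate). A maximizer
on the compact set `Q` exists; since `-t log t` has infinite slope at `0` and `Q` meets the open
simplex, it lies in the open simplex, where it satisfies the optimality condition. Strict
concavity makes any two such points equal.
-/

open Real Finset Set Filter Topology

lemma Real.negMulLog_lt_tangent {s t : ℝ} (hs : 0 < s) (ht : 0 ≤ t) (hts : t ≠ s) :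
    negMulLog t < negMulLog s - (log s + 1) * (t - s) := by
  have h := self_sub_one_lt_mul_log (div_nonneg ht hs.le)
    fun h => hts (by field_simp at h; linarith)
  have hlog : t * log (t / s) = t * log t - t * log s := by
    rcases ht.eq_or_lt with rfl | ht
    · simp
    · rw [log_div ht.ne' hs.ne']; ring
  have hmul := mul_lt_mul_of_pos_left h hs
  rw [mul_sub, mul_one, mul_div_cancel₀ _ hs.ne', ← mul_assoc, mul_div_cancel₀ _ hs.ne',
    hlog] at hmul
  simp only [negMulLog]
  nlinarith

lemma Real.mul_log_add_mul_le {u d t s : ℝ} (hts : t ≤ s) (ht : 0 < u + t * d)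
    (hs : 0 < u + s * d) : d * log (u + t * d) ≤ d * log (u + s * d) := by
  rcases le_total 0 d with hd | hd
  · exact mul_le_mul_of_nonneg_left (log_le_log ht (by nlinarith)) hd
  · exact mul_le_mul_of_nonpos_left (log_le_log hs (by nlinarith)) hd

section TiltedEntropy

variable {ι : Type*} [Fintype ι] (c : ι → ℝ) {x y : ι → ℝ}

noncomputable def tiltedEntropy (x : ι → ℝ) : ℝ := ∑ i, (negMulLog (x i) + c i * x i)

/-- The derivative of `t ↦ tiltedEntropy c (x + t • (y - x))` when `∑ i, x i = ∑ i, y i`. -/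
noncomputable def tiltedEntropyDeriv (x y : ι → ℝ) (t : ℝ) : ℝ :=
  ∑ i, (c i - log (x i + t * (y i - x i))) * (y i - x i)

lemma continuous_tiltedEntropy : Continuous (tiltedEntropy c) := by
  unfold tiltedEntropy; fun_prop

lemma tiltedEntropy_lt (hx : ∀ i, 0 < x i) (hy : ∀ i, 0 ≤ y i) (hsum : ∑ i, y i = ∑ i, x i)
    (hne : y ≠ x) :
    tiltedEntropy c y < tiltedEntropy c x + ∑ i, (c i - log (x i)) * (y i - x i) := by
  obtain ⟨i₀, hi₀⟩ := Function.ne_iff.mp hne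
  have h := Finset.sum_lt_sum (s := univ)
    (f := fun i => negMulLog (y i) + c i * y i)
    (g := fun i => negMulLog (x i) + c i * x i + (c i - log (x i)) * (y i - x i) - (y i - x i))
    (fun i _ => by
      rcases eq_or_ne (y i) (x i) with h | h
      · simp [h]
      · nlinarith [negMulLog_lt_tangent (hx i) (hy i) h])
    ⟨i₀, mem_univ _, by nlinarith [negMulLog_lt_tangent (hx i₀) (hy i₀) hi₀]⟩
  simp only [sum_add_distrib, sum_sub_distrib] at h
  simp only [tiltedEntropy, sum_add_distrib]
  linarith

lemma tiltedEntropy_le (hx : ∀ i, 0 < x i) (hy : ∀ i, 0 ≤ y i) (hsum : ∑ i, y i = ∑ i, x i) :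
    tiltedEntropy c y ≤ tiltedEntropy c x + ∑ i, (c i - log (x i)) * (y i - x i) := by
  rcases eq_or_ne y x with rfl | hne
  · simp
  · exact (tiltedEntropy_lt c hx hy hsum hne).le

variable {c} {K : Set (ι → ℝ)}

lemma tiltedEntropyDeriv_nonpos_of_isMaxOn (hK : Convex ℝ K) (hKs : K ⊆ stdSimplex ℝ ι)
    (hx : x ∈ K) (hmax : IsMaxOn (tiltedEntropy c) K x) (hy : y ∈ K) {t : ℝ} (ht : 0 < t)
    (ht1 : t ≤ 1) (hw : ∀ i, 0 < x i + t * (y i - x i)) :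
    tiltedEntropyDeriv c x y t ≤ 0 := by
  have hwK : x + t • (y - x) ∈ K := hK.add_smul_sub_mem hx hy ⟨ht.le, ht1⟩
  have hgrad := tiltedEntropy_le c (x := x + t • (y - x)) (by simpa using hw) (hKs hx).1
    (by rw [(hKs hx).2, (hKs hwK).2])
  have hlin : ∑ i, (c i - log ((x + t • (y - x)) i)) * (x i - (x + t • (y - x)) i)
      = -t * tiltedEntropyDeriv c x y t := by
    simp only [tiltedEntropyDeriv, mul_sum, Pi.add_apply, Pi.smul_apply, Pi.sub_apply,
      smul_eq_mul]
    exact sum_congr rfl fun i _ => by ring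
  have := isMaxOn_iff.mp hmax _ hwK
  nlinarith

lemma sub_mul_log_le_tiltedEntropyDeriv (hx : ∀ i, 0 ≤ x i) (hy : ∀ i, 0 < y i) {i₀ : ι}
    (hxi₀ : x i₀ = 0) {t : ℝ} (ht : 0 < t) (ht1 : t ≤ 1) :
    tiltedEntropyDeriv c x y 1 - y i₀ * log t ≤ tiltedEntropyDeriv c x y t := by
  have hw : ∀ s, 0 < s → s ≤ 1 → ∀ i, 0 < x i + s * (y i - x i) := fun s hs hs1 i => by
    nlinarith [hx i, hy i]
  have hterm : ∀ i, 0 ≤ (y i - x i) * log (y i) - (y i - x i) * log (x i + t * (y i - x i)) :=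
    fun i => by
      have := mul_log_add_mul_le ht1 (hw t ht ht1 i) (hw 1 one_pos le_rfl i)
      rw [one_mul, add_sub_cancel] at this
      linarith
  have hi₀ := single_le_sum (fun i _ => hterm i) (mem_univ i₀)
  rw [hxi₀, sub_zero, zero_add, log_mul ht.ne' (hy i₀).ne'] at hi₀
  have hdiff : tiltedEntropyDeriv c x y t - tiltedEntropyDeriv c x y 1 = ∑ i,
      ((y i - x i) * log (y i) - (y i - x i) * log (x i + t * (y i - x i))) := by
    simp only [tiltedEntropyDeriv, ← sum_sub_distrib, one_mul, add_sub_cancel]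
    exact sum_congr rfl fun i _ => by ring
  linarith

lemma pos_of_isMaxOn_tiltedEntropy (hK : Convex ℝ K) (hKs : K ⊆ stdSimplex ℝ ι) {p : ι → ℝ}
    (hpK : p ∈ K) (hp : ∀ i, 0 < p i) (hx : x ∈ K) (hmax : IsMaxOn (tiltedEntropy c) K x) :
    ∀ i, 0 < x i := by
  intro i₀
  refine ((hKs hx).1 i₀).lt_of_ne fun hxi₀ => ?_
  -- the slope towards `p` blows up like `-p i₀ * log t` as `t → 0`
  set D := tiltedEntropyDeriv c x p 1
  set t := rexp (-(|D| + 1) / p i₀)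
  have ht : 0 < t := exp_pos _
  have ht1 : t ≤ 1 :=
    exp_le_one_iff.mpr (div_nonpos_of_nonpos_of_nonneg (by linarith [abs_nonneg D]) (hp i₀).le)
  have hlog : p i₀ * log t = -(|D| + 1) := by rw [log_exp, mul_div_cancel₀ _ (hp i₀).ne']
  have hlow := sub_mul_log_le_tiltedEntropyDeriv (c := c) (hKs hx).1 hp hxi₀.symm ht ht1
  have hup := tiltedEntropyDeriv_nonpos_of_isMaxOn hK hKs hx hmax hpK ht ht1
    fun i => by nlinarith [(hKs hx).1 i, hp i]
  linarith [neg_abs_le D]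

lemma forall_sum_mul_sub_nonpos_of_isMaxOn (hK : Convex ℝ K) (hKs : K ⊆ stdSimplex ℝ ι)
    (hx : x ∈ K) (hxpos : ∀ i, 0 < x i) (hmax : IsMaxOn (tiltedEntropy c) K x) (hy : y ∈ K) :
    ∑ i, (c i - log (x i)) * (y i - x i) ≤ 0 := by
  have hcont : ContinuousAt (tiltedEntropyDeriv c x y) 0 := by
    unfold tiltedEntropyDeriv
    fun_prop (disch := simp [(hxpos _).ne'])
  have hlim := hcont.tendsto.mono_left (nhdsWithin_le_nhds (s := Ioi 0))
  simp only [tiltedEntropyDeriv, zero_mul, add_zero] at hlim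
  refine le_of_tendsto hlim ?_
  filter_upwards [Ioo_mem_nhdsGT one_pos] with t ⟨ht, ht1⟩
  exact tiltedEntropyDeriv_nonpos_of_isMaxOn hK hKs hx hmax hy ht ht1.le
    fun i => by nlinarith [hxpos i, (hKs hy).1 i]

lemma eq_of_forall_sum_mul_sub_nonpos {x' : ι → ℝ} (hx : ∀ i, 0 < x i) (hx' : ∀ i, 0 < x' i)
    (hsum : ∑ i, x' i = ∑ i, x i) (h : ∑ i, (c i - log (x i)) * (x' i - x i) ≤ 0)
    (h' : ∑ i, (c i - log (x' i)) * (x i - x' i) ≤ 0) : x' = x := by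
  by_contra hne
  have := tiltedEntropy_lt c hx (fun i => (hx' i).le) hsum hne
  have := tiltedEntropy_lt c hx' (fun i => (hx i).le) hsum.symm (Ne.symm hne)
  linarith

theorem existsUnique_pos_optimality_tiltedEntropy (c : ι → ℝ) (hK : Convex ℝ K)
    (hKc : IsCompact K) (hKs : K ⊆ stdSimplex ℝ ι) {p : ι → ℝ} (hpK : p ∈ K)
    (hp : ∀ i, 0 < p i) :
    ∃! x, x ∈ K ∧ (∀ i, 0 < x i) ∧ ∀ y ∈ K, ∑ i, (c i - log (x i)) * (y i - x i) ≤ 0 := by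
  obtain ⟨x, hx, hmax⟩ :=
    hKc.exists_isMaxOn ⟨p, hpK⟩ (continuous_tiltedEntropy c).continuousOn
  have hxpos := pos_of_isMaxOn_tiltedEntropy hK hKs hpK hp hx hmax
  refine ⟨x, ⟨hx, hxpos, fun y hy => forall_sum_mul_sub_nonpos_of_isMaxOn hK hKs hx hxpos hmax hy⟩,
    fun x' ⟨hx', hx'pos, hopt'⟩ => ?_⟩
  exact eq_of_forall_sum_mul_sub_nonpos hxpos hx'pos (by rw [(hKs hx).2, (hKs hx').2])
    (forall_sum_mul_sub_nonpos_of_isMaxOn hK hKs hx hxpos hmax hx') (hopt' x hx)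

end TiltedEntropy

section Slack

variable {ι : Type*} [Fintype ι]

/-- Homogeneous coordinates: `{x | 0 ≤ x, ∑ x ≤ 1}` becomes the standard simplex on `Option ι`,
with the slack `1 - ∑ j, x j` as coordinate `none`. -/
def withSlack (x : ι → ℝ) : Option ι → ℝ := fun i => i.elim (1 - ∑ j, x j) x

@[simp] lemma withSlack_none (x : ι → ℝ) : withSlack x none = 1 - ∑ j, x j := rfl

@[simp] lemma withSlack_some (x : ι → ℝ) (j : ι) : withSlack x (some j) = x j := rfl

lemma withSlack_injective : Function.Injective (withSlack (ι := ι)) :=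
  fun _ _ h => funext fun j => congrFun h (some j)

lemma continuous_withSlack : Continuous (withSlack (ι := ι)) :=
  continuous_pi fun i => by cases i <;> simp only [withSlack_none, withSlack_some] <;> fun_prop

lemma Convex.withSlack_image {Q : Set (ι → ℝ)} (hQ : Convex ℝ Q) :
    Convex ℝ (withSlack '' Q) := by
  rintro _ ⟨x, hx, rfl⟩ _ ⟨y, hy, rfl⟩ a b ha hb hab
  refine ⟨a • x + b • y, hQ hx hy ha hb hab, ?_⟩
  ext (_ | j)
  · simp only [withSlack_none, Pi.add_apply, Pi.smul_apply, smul_eq_mul, sum_add_distrib,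
      ← mul_sum]
    linear_combination -hab
  · simp

lemma withSlack_mem_stdSimplex {x : ι → ℝ} (hx : (∀ j, 0 ≤ x j) ∧ ∑ j, x j ≤ 1) :
    withSlack x ∈ stdSimplex ℝ (Option ι) := by
  refine ⟨fun i => ?_, by simp [Fintype.sum_option]⟩
  cases i
  · simpa using hx.2
  · simpa using hx.1 _

lemma pos_withSlack_of_mem_interior {p : ι → ℝ}
    (hp : p ∈ interior {x : ι → ℝ | (∀ j, 0 ≤ x j) ∧ ∑ j, x j ≤ 1}) :
    ∀ i, 0 < withSlack p i := by
  have hnear : ∀ v : ι → ℝ, ∀ᶠ s in 𝓝[>] (0 : ℝ),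
      0 < s ∧ (∀ j, 0 ≤ p j + s * v j) ∧ ∑ j, (p j + s * v j) ≤ 1 := fun v => by
    have hlim : Tendsto (fun s : ℝ => p + s • v) (𝓝 0) (𝓝 p) := by
      simpa using tendsto_const_nhds.add ((tendsto_id (x := 𝓝 (0 : ℝ))).smul_const v)
    exact eventually_mem_nhdsWithin.and
      (tendsto_nhdsWithin_of_tendsto_nhds hlim (mem_interior_iff_mem_nhds.mp hp))
  obtain ⟨s, hs, hnonneg, -⟩ := (hnear fun _ => -1).exists
  obtain ⟨r, hr, -, hsum⟩ := (hnear p).exists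
  rintro (_ | j)
  · have hp0 : 0 ≤ ∑ j, p j := sum_nonneg fun j _ => (interior_subset hp).1 j
    rw [sum_add_distrib, ← mul_sum] at hsum
    rw [withSlack_none]
    nlinarith
  · have := hnonneg j
    rw [withSlack_some]
    linarith

lemma sum_withSlack_mul_sub (g : Option ι → ℝ) (x y : ι → ℝ) :
    ∑ i, g i * (withSlack y i - withSlack x i) = ∑ j, (g (some j) - g none) * (y j - x j) := by
  simp only [Fintype.sum_option, withSlack_none, withSlack_some, sub_mul, sum_sub_distrib,
    ← mul_sum]
  ring

end Slack

section Moment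

variable {ι : Type*} [Fintype ι]

lemma div_one_add_sum_eq_iff {b x : ι → ℝ} (hb : ∀ j, 0 < b j) :
    (∀ j, b j / (1 + ∑ k, b k) = x j) ↔
      (∀ i, 0 < withSlack x i) ∧ ∀ j, b j = x j / (1 - ∑ k, x k) := by
  have hS : 0 < 1 + ∑ k, b k :=
    add_pos_of_pos_of_nonneg one_pos (sum_nonneg fun k _ => (hb k).le)
  constructor
  · intro hx
    have hslack : 1 - ∑ k, x k = 1 / (1 + ∑ k, b k) := by
      simp only [← hx, ← sum_div]
      field_simp
      ring
    refine ⟨fun i => ?_, fun j => ?_⟩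
    · cases i
      · simpa [hslack] using hS
      · simpa [← hx] using div_pos (hb _) hS
    · rw [hslack, ← hx]
      field_simp
  · rintro ⟨hx, hb⟩ j
    have hslack : 0 < 1 - ∑ k, x k := hx none
    simp only [hb, ← sum_div]
    field_simp
    ring

lemma norm_cexp_mul_sq (τ : ℝ) (w : ℂ) :
    ‖Complex.exp (-(τ : ℂ) / 2) * w‖ ^ 2 = rexp (-τ) * ‖w‖ ^ 2 := by
  rw [norm_mul, mul_pow, ← Complex.ofReal_neg, ← Complex.ofReal_ofNat, ← Complex.ofReal_div,
    Complex.norm_exp_ofReal, ← exp_nat_mul]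
  ring_nf

noncomputable def tauOf (z : ι → ℂ) (x : ι → ℝ) : ι → ℝ :=
  fun j => log (‖z j‖ ^ 2) - log (x j) + log (1 - ∑ k, x k)

lemma moment_eq_iff {z : ι → ℂ} (hz : ∀ j, z j ≠ 0) (τ x : ι → ℝ) :
    (∀ j, ‖Complex.exp (-(τ j : ℂ) / 2) * z j‖ ^ 2
        / (1 + ∑ k, ‖Complex.exp (-(τ k : ℂ) / 2) * z k‖ ^ 2) = x j) ↔
      (∀ i, 0 < withSlack x i) ∧ τ = tauOf z x := by
  have ha : ∀ j, 0 < ‖z j‖ ^ 2 := fun j => pow_pos (norm_pos_iff.mpr (hz j)) 2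
  simp only [norm_cexp_mul_sq]
  rw [div_one_add_sum_eq_iff fun j => mul_pos (exp_pos _) (ha j)]
  refine and_congr_right fun hx => ?_
  have hxj : ∀ j, 0 < x j := fun j => hx (some j)
  have hx0 : 0 < 1 - ∑ k, x k := hx none
  rw [funext_iff]
  refine forall_congr' fun j => ?_
  have hlog : log (x j / (1 - ∑ k, x k)) = log (x j) - log (1 - ∑ k, x k) :=
    log_div (hxj j).ne' hx0.ne'
  constructor
  · intro h
    have := congrArg log h
    rw [log_mul (exp_pos _).ne' (ha j).ne', log_exp, hlog] at this
    rw [tauOf]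
    linarith
  · intro h
    rw [h, tauOf, show -(log (‖z j‖ ^ 2) - log (x j) + log (1 - ∑ k, x k))
      = log (x j / (1 - ∑ k, x k)) - log (‖z j‖ ^ 2) by rw [hlog]; ring,
      exp_sub, exp_log (div_pos (hxj j) hx0), exp_log (ha j), div_mul_cancel₀ _ (ha j).ne']

/-- The weights of the moment map in homogeneous coordinates; the slack coordinate has weight
`1`, from the `1 +` in the denominator of `μ`. -/
noncomputable def logWeight (z : ι → ℂ) : Option ι → ℝ :=
  fun i => i.elim 0 fun j => log (‖z j‖ ^ 2)

lemma tauOf_normalCone_iff (z : ι → ℂ) (Q : Set (ι → ℝ)) (x : ι → ℝ) :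
    (∀ y ∈ Q, ∑ j, tauOf z x j * y j ≤ ∑ j, tauOf z x j * x j) ↔
      ∀ y ∈ withSlack '' Q,
        ∑ i, (logWeight z i - log (withSlack x i)) * (y i - withSlack x i) ≤ 0 := by
  simp only [forall_mem_image, sum_withSlack_mul_sub]
  refine forall₂_congr fun y _ => ?_
  rw [← sub_nonpos, ← sum_sub_distrib]
  exact iff_of_eq (congrArg (· ≤ 0) (sum_congr rfl fun j _ => by
    simp only [tauOf, logWeight, withSlack_none, withSlack_some, Option.elim]; ring))

end Moment

theorem exists_unique_normal_cone_point_general (m : ℕ)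
    (V : Finset (Fin m → ℝ))
    (Q : Set (Fin m → ℝ)) (hQ : Q = convexHull ℝ (V : Set (Fin m → ℝ)))
    (hQSigma : Q ⊆ {x | (∀ j, 0 ≤ x j) ∧ ∑ j, x j ≤ 1})
    (hbd : ¬ Q ⊆ frontier {x : Fin m → ℝ | (∀ j, 0 ≤ x j) ∧ ∑ j, x j ≤ 1})
    (μ : (Fin m → ℂ) → (Fin m → ℝ))
    (hμ : ∀ w j, μ w j = ‖w j‖ ^ 2 / (1 + ∑ k, ‖w k‖ ^ 2))
    (z : Fin m → ℂ) (hz : ∀ j, z j ≠ 0) :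
    ∃! τx : (Fin m → ℝ) × (Fin m → ℝ),
      τx.2 ∈ Q ∧
      μ (fun j => Complex.exp (-(τx.1 j : ℂ) / 2) * z j) = τx.2 ∧
      ∀ y ∈ Q, ∑ j, τx.1 j * y j ≤ ∑ j, τx.1 j * τx.2 j := by
  have hμz : ∀ τ x, μ (fun j => Complex.exp (-(τ j : ℂ) / 2) * z j) = x ↔
      (∀ i, 0 < withSlack x i) ∧ τ = tauOf z x := fun τ x => by
    rw [funext_iff]
    simp only [hμ]
    exact moment_eq_iff hz τ x
  have hQconv : Convex ℝ Q := hQ ▸ convex_convexHull ℝ _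
  have hQcomp : IsCompact Q := hQ ▸ V.finite_toSet.isCompact_convexHull (𝕜 := ℝ)
  obtain ⟨p, hpQ, hpfr⟩ := not_subset.mp hbd
  have hp : p ∈ interior {x : Fin m → ℝ | (∀ j, 0 ≤ x j) ∧ ∑ j, x j ≤ 1} :=
    self_sdiff_frontier (X := Fin m → ℝ) _ ▸ ⟨hQSigma hpQ, hpfr⟩
  obtain ⟨_, ⟨⟨x, hxQ, rfl⟩, hxpos, hopt⟩, huniq⟩ :=
    existsUnique_pos_optimality_tiltedEntropy (logWeight z) hQconv.withSlack_image
      (hQcomp.image continuous_withSlack)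
      (image_subset_iff.mpr fun x hx => withSlack_mem_stdSimplex (hQSigma hx))
      (mem_image_of_mem _ hpQ) (pos_withSlack_of_mem_interior hp)
  refine ⟨(tauOf z x, x),
    ⟨hxQ, (hμz _ _).mpr ⟨hxpos, rfl⟩, (tauOf_normalCone_iff z Q x).mpr hopt⟩, ?_⟩
  rintro ⟨τ, y⟩ ⟨hyQ, hμy, hcone⟩
  obtain ⟨hypos, rfl⟩ := (hμz τ y).mp hμy
  obtain rfl : y = x := withSlack_injective
    (huniq _ ⟨mem_image_of_mem _ hyQ, hypos, (tauOf_normalCone_iff z Q y).mp hcone⟩)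
  rfl

/-- For a convex polytope `Q ⊆ Σ` not contained in `∂Σ` and any
`z ∈ (ℂ*)ᵐ`, there exist unique `τ_z ∈ ℝᵐ` and `x_z ∈ Q` with
`μ(e^{−τ_z/2}·z) = x_z` and `τ_z` in the normal cone to `Q` at `x_z`. -/
theorem exists_unique_normal_cone_point (m : ℕ)
    (V : Finset (Fin m → ℝ)) (hV : V.Nonempty)
    (Q : Set (Fin m → ℝ)) (hQ : Q = convexHull ℝ (V : Set (Fin m → ℝ)))
    (hQSigma : Q ⊆ {x | (∀ j, 0 ≤ x j) ∧ ∑ j, x j ≤ 1})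
    (hbd : ¬ Q ⊆ frontier {x : Fin m → ℝ | (∀ j, 0 ≤ x j) ∧ ∑ j, x j ≤ 1})
    (μ : (Fin m → ℂ) → (Fin m → ℝ))
    (hμ : ∀ w j, μ w j = ‖w j‖ ^ 2 / (1 + ∑ k, ‖w k‖ ^ 2))
    (z : Fin m → ℂ) (hz : ∀ j, z j ≠ 0) :
    ∃! τx : (Fin m → ℝ) × (Fin m → ℝ),
      τx.2 ∈ Q ∧
      μ (fun j => Complex.exp (-(τx.1 j : ℂ) / 2) * z j) = τx.2 ∧
      ∀ y ∈ Q, ∑ j, τx.1 j * y j ≤ ∑ j, τx.1 j * τx.2 j :=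
  exists_unique_normal_cone_point_general m V Q hQ hQSigma hbd μ hμ z hz
end

section
/- Let P' ⊂ P ⊂ pΣ be convex polytopes in ℝᵐ not contained in ∂(pΣ), let z ∈ (ℂ*)ᵐ, and let b_P, b_{P'} be the decay functions defined by b_Q(z) = −⟨q_Q(z), τ_Q(z)⟩ + p log((1+‖z‖²)/(1+‖e^{−τ_Q(z)/2}·z‖²)), where q_Q(z) ∈ Q and τ_Q(z) in the normal cone of Q at q_Q(z) are the unique elements with pμ(e^{−τ_Q(z)/2}·z) = q_Q(z). Then b_{P'}(z) ≥ b_P(z), with equality if and only if q_P(z) ∈ P'. -/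
/-!
Write `r_j = |z_j|²`, `Z(τ) = 1 + ∑ e^{-τ_j} r_j` and `Φ_q(τ) = ⟨τ, q⟩ + p log Z(τ)`, so that
`b_Q = p log(1 + ‖z‖²) - Φ_{q_Q}(τ_Q)`. If `q = p μ(τ)`, then `Φ_q(σ) - Φ_q(τ)` is `p` times the
Kullback–Leibler divergence between the probability vectors `(1, e^{-τ} r) / Z(τ)` and
`(1, e^{-σ} r) / Z(σ)`, so `τ` is the unique minimiser of `Φ_q`. Hence
`Φ_{q'}(τ') ≤ Φ_{q'}(τ) ≤ Φ_q(τ)`, the second step by the normal cone condition at `q` tested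
against `q' ∈ P' ⊆ P`. Equality forces `τ = τ'` and so `q = q' ∈ P'`; conversely, if `q ∈ P'`,
the same chain with the roles of `P` and `P'` exchanged gives the reverse inequality.
-/

open Real Finset InformationTheory

section Gibbs

variable {κ : Type*} [Fintype κ] {x y : κ → ℝ}

lemma mul_klFun_div_eq {a b : ℝ} (ha : 0 ≤ a) (hb : 0 < b) :
    b * klFun (a / b) = a * (log a - log b) + b - a := by
  rcases ha.eq_or_lt with rfl | ha
  · simp [klFun_zero]
  · rw [klFun_apply, log_div ha.ne' hb.ne']
    field_simp

lemma sum_mul_log_sub_log_eq_sum_mul_klFun (hx : ∀ i, 0 ≤ x i) (hy : ∀ i, 0 < y i)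
    (hxy : ∑ i, x i = ∑ i, y i) :
    ∑ i, x i * (log (x i) - log (y i)) = ∑ i, y i * klFun (x i / y i) := by
  simp_rw [mul_klFun_div_eq (hx _) (hy _), sum_sub_distrib, sum_add_distrib, hxy,
    add_sub_cancel_right]

theorem sum_mul_log_sub_log_nonneg (hx : ∀ i, 0 ≤ x i) (hy : ∀ i, 0 < y i)
    (hxy : ∑ i, x i = ∑ i, y i) : 0 ≤ ∑ i, x i * (log (x i) - log (y i)) := by
  rw [sum_mul_log_sub_log_eq_sum_mul_klFun hx hy hxy]
  exact sum_nonneg fun i _ => mul_nonneg (hy i).le (klFun_nonneg (div_nonneg (hx i) (hy i).le))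

theorem sum_mul_log_sub_log_eq_zero_iff (hx : ∀ i, 0 ≤ x i) (hy : ∀ i, 0 < y i)
    (hxy : ∑ i, x i = ∑ i, y i) : ∑ i, x i * (log (x i) - log (y i)) = 0 ↔ x = y := by
  have hterm (i : κ) : 0 ≤ y i * klFun (x i / y i) :=
    mul_nonneg (hy i).le (klFun_nonneg (div_nonneg (hx i) (hy i).le))
  rw [sum_mul_log_sub_log_eq_sum_mul_klFun hx hy hxy,
    Fintype.sum_eq_zero_iff_of_nonneg hterm, funext_iff, funext_iff]
  refine forall_congr' fun i => ?_
  rw [Pi.zero_apply, mul_eq_zero, or_iff_right (hy i).ne',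
    klFun_eq_zero_iff (div_nonneg (hx i) (hy i).le), div_eq_one_iff_eq (hy i).ne']

end Gibbs

section DualPotential

variable {ι : Type*} [Fintype ι] {p : ℝ} {r q τ σ : ι → ℝ}

noncomputable def partitionFunction (r τ : ι → ℝ) : ℝ := 1 + ∑ j, exp (-τ j) * r j

/-- The moment map of `ℂPᵐ` at `[1 : e^{-τ/2} z]`, where `r_j = |z_j|²`; the extra index `none`
is the homogeneous coordinate `1`. -/
noncomputable def homogeneousMoment (r τ : ι → ℝ) (o : Option ι) : ℝ :=
  o.elim 1 (fun j => exp (-τ j) * r j) / partitionFunction r τ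

noncomputable def dualPotential (p : ℝ) (r q τ : ι → ℝ) : ℝ :=
  ∑ j, τ j * q j + p * log (partitionFunction r τ)

lemma partitionFunction_pos (hr : ∀ j, 0 ≤ r j) (τ : ι → ℝ) : 0 < partitionFunction r τ :=
  add_pos_of_pos_of_nonneg one_pos (sum_nonneg fun j _ => mul_nonneg (exp_pos _).le (hr j))

lemma homogeneousMoment_pos (hr : ∀ j, 0 < r j) (τ : ι → ℝ) (o : Option ι) :
    0 < homogeneousMoment r τ o := by
  refine div_pos ?_ (partitionFunction_pos (fun j => (hr j).le) τ)
  cases o with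
  | none => exact one_pos
  | some j => exact mul_pos (exp_pos _) (hr j)

lemma sum_homogeneousMoment (hr : ∀ j, 0 ≤ r j) (τ : ι → ℝ) :
    ∑ o, homogeneousMoment r τ o = 1 := by
  simp only [homogeneousMoment]
  rw [← sum_div, Fintype.sum_option, div_eq_one_iff_eq (partitionFunction_pos hr τ).ne']
  rfl

lemma log_homogeneousMoment_sub (hr : ∀ j, 0 < r j) (τ σ : ι → ℝ) (o : Option ι) :
    log (homogeneousMoment r τ o) - log (homogeneousMoment r σ o) =
      o.elim 0 (fun j => σ j - τ j) +
        (log (partitionFunction r σ) - log (partitionFunction r τ)) := by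
  have hZ := partitionFunction_pos (fun j => (hr j).le)
  cases o with
  | none =>
    simp only [homogeneousMoment, Option.elim_none, one_div, log_inv]
    ring
  | some j =>
    simp only [homogeneousMoment, Option.elim_some,
      log_div (mul_pos (exp_pos _) (hr j)).ne' (hZ _).ne', log_mul (exp_ne_zero _) (hr j).ne',
      log_exp]
    ring

lemma homogeneousMoment_injective (hr : ∀ j, 0 < r j) :
    Function.Injective (homogeneousMoment r) := by
  intro τ σ h
  have hZ := partitionFunction_pos (fun j => (hr j).le)
  have hZeq : partitionFunction r τ = partitionFunction r σ := by
    simpa [homogeneousMoment, (hZ τ).ne', (hZ σ).ne'] using congrFun h none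
  funext j
  have := congrFun h (some j)
  simp only [homogeneousMoment, Option.elim_some, hZeq] at this
  rw [div_left_inj' (hZ σ).ne', mul_left_inj' (hr j).ne', exp_eq_exp, neg_inj] at this
  exact this

lemma dualPotential_sub_dualPotential (hr : ∀ j, 0 < r j)
    (hq : ∀ j, q j = p * homogeneousMoment r τ (some j)) (σ : ι → ℝ) :
    dualPotential p r q σ - dualPotential p r q τ =
      p * ∑ o, homogeneousMoment r τ o *
        (log (homogeneousMoment r τ o) - log (homogeneousMoment r σ o)) := by
  have hlinear : ∑ j, σ j * q j - ∑ j, τ j * q j =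
      p * ∑ j, homogeneousMoment r τ (some j) * (σ j - τ j) := by
    rw [← sum_sub_distrib, mul_sum]
    exact sum_congr rfl fun j _ => by rw [hq]; ring
  simp_rw [log_homogeneousMoment_sub hr, mul_add, sum_add_distrib, ← sum_mul,
    sum_homogeneousMoment (fun j => (hr j).le), Fintype.sum_option]
  simp only [dualPotential, Option.elim_none, Option.elim_some, mul_zero, zero_add, one_mul]
  linarith

theorem dualPotential_le (hp : 0 ≤ p) (hr : ∀ j, 0 < r j)
    (hq : ∀ j, q j = p * homogeneousMoment r τ (some j)) (σ : ι → ℝ) :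
    dualPotential p r q τ ≤ dualPotential p r q σ := by
  rw [← sub_nonneg, dualPotential_sub_dualPotential hr hq]
  exact mul_nonneg hp <| sum_mul_log_sub_log_nonneg (fun o => (homogeneousMoment_pos hr τ o).le)
    (homogeneousMoment_pos hr σ) (by rw [sum_homogeneousMoment, sum_homogeneousMoment] <;>
      exact fun j => (hr j).le)

theorem dualPotential_eq_iff (hp : 0 < p) (hr : ∀ j, 0 < r j)
    (hq : ∀ j, q j = p * homogeneousMoment r τ (some j)) :
    dualPotential p r q σ = dualPotential p r q τ ↔ σ = τ := by
  have hr' (j : ι) : 0 ≤ r j := (hr j).le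
  rw [← sub_eq_zero, dualPotential_sub_dualPotential hr hq, mul_eq_zero, or_iff_right hp.ne',
    sum_mul_log_sub_log_eq_zero_iff (fun o => (homogeneousMoment_pos hr τ o).le)
      (homogeneousMoment_pos hr σ) (by rw [sum_homogeneousMoment hr', sum_homogeneousMoment hr']),
    (homogeneousMoment_injective hr).eq_iff, eq_comm]

lemma dualPotential_le_of_sum_mul_le {q' : ι → ℝ} (h : ∑ j, τ j * q' j ≤ ∑ j, τ j * q j) :
    dualPotential p r q' τ ≤ dualPotential p r q τ := by
  unfold dualPotential
  linarith

theorem dualPotential_of_moment_le_of_sum_mul_le {q' τ' : ι → ℝ} (hp : 0 ≤ p)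
    (hr : ∀ j, 0 < r j) (hq' : ∀ j, q' j = p * homogeneousMoment r τ' (some j))
    (h : ∑ j, τ j * q' j ≤ ∑ j, τ j * q j) :
    dualPotential p r q' τ' ≤ dualPotential p r q τ :=
  (dualPotential_le hp hr hq' τ).trans (dualPotential_le_of_sum_mul_le h)

end DualPotential

lemma norm_cexp_neg_half_mul_sq (t : ℝ) (w : ℂ) :
    ‖Complex.exp (-(t : ℂ) / 2) * w‖ ^ 2 = exp (-t) * ‖w‖ ^ 2 := by
  rw [norm_mul, mul_pow, Complex.norm_exp, ← exp_nat_mul]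
  congr 2
  simp only [Complex.div_ofNat_re, Complex.neg_re, Complex.ofReal_re, Nat.cast_ofNat]
  ring

lemma neg_sum_mul_add_log_div_eq {ι : Type*} [Fintype ι] {r : ι → ℝ} (hr : ∀ j, 0 ≤ r j)
    (p : ℝ) (q τ : ι → ℝ) :
    -(∑ j, q j * τ j) + p * log ((1 + ∑ j, r j) / partitionFunction r τ) =
      p * log (1 + ∑ j, r j) - dualPotential p r q τ := by
  have hR : 0 < 1 + ∑ j, r j := add_pos_of_pos_of_nonneg one_pos (sum_nonneg fun j _ => hr j)
  rw [log_div hR.ne' (partitionFunction_pos hr τ).ne', dualPotential]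
  simp_rw [mul_comm (q _)]
  ring

theorem decay_function_monotone_general (m : ℕ) (p : ℝ) (hp : 0 < p)
    (P P' : Set (Fin m → ℝ))
    (hsub : P' ⊆ P)
    (z : Fin m → ℂ) (hz : ∀ j, z j ≠ 0)
    (qP τP qP' τP' : Fin m → ℝ)
    (hqP' : qP' ∈ P')
    -- `p μ(e^{−τ/2}·z) = q` for each polytope:
    (hμP : ∀ j, p * (‖Complex.exp (-(τP j : ℂ) / 2) * z j‖ ^ 2 /
        (1 + ∑ k, ‖Complex.exp (-(τP k : ℂ) / 2) * z k‖ ^ 2)) = qP j)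
    (hμP' : ∀ j, p * (‖Complex.exp (-(τP' j : ℂ) / 2) * z j‖ ^ 2 /
        (1 + ∑ k, ‖Complex.exp (-(τP' k : ℂ) / 2) * z k‖ ^ 2)) = qP' j)
    -- `τ` lies in the normal cone at `q`:
    (hconeP : ∀ y ∈ P, ∑ j, τP j * y j ≤ ∑ j, τP j * qP j)
    (hconeP' : ∀ y ∈ P', ∑ j, τP' j * y j ≤ ∑ j, τP' j * qP' j)
    (bP bP' : ℝ)
    (hbP : bP = -(∑ j, qP j * τP j) + p * Real.log ((1 + ∑ j, ‖z j‖ ^ 2) /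
        (1 + ∑ j, ‖Complex.exp (-(τP j : ℂ) / 2) * z j‖ ^ 2)))
    (hbP' : bP' = -(∑ j, qP' j * τP' j) + p * Real.log ((1 + ∑ j, ‖z j‖ ^ 2) /
        (1 + ∑ j, ‖Complex.exp (-(τP' j : ℂ) / 2) * z j‖ ^ 2))) :
    bP ≤ bP' ∧ (bP' = bP ↔ qP ∈ P') := by
  set r : Fin m → ℝ := fun j => ‖z j‖ ^ 2
  have hr (j : Fin m) : 0 < r j := pow_pos (norm_pos_iff.2 (hz j)) 2
  simp only [norm_cexp_neg_half_mul_sq] at hμP hμP' hbP hbP'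
  have hmomentP (j : Fin m) : qP j = p * homogeneousMoment r τP (some j) := (hμP j).symm
  have hmomentP' (j : Fin m) : qP' j = p * homogeneousMoment r τP' (some j) := (hμP' j).symm
  rw [hbP.trans (neg_sum_mul_add_log_div_eq (fun j => (hr j).le) p qP τP),
    hbP'.trans (neg_sum_mul_add_log_div_eq (fun j => (hr j).le) p qP' τP')]
  have hcone : ∑ j, τP j * qP' j ≤ ∑ j, τP j * qP j := hconeP qP' (hsub hqP')
  have hle : dualPotential p r qP' τP' ≤ dualPotential p r qP τP :=
    dualPotential_of_moment_le_of_sum_mul_le hp.le hr hmomentP' hcone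
  refine ⟨by linarith, fun heq => ?_, fun hmem => ?_⟩
  · have hτ : τP = τP' := by
      refine (dualPotential_eq_iff hp hr hmomentP').1 (le_antisymm ?_
        (dualPotential_le hp.le hr hmomentP' τP))
      calc dualPotential p r qP' τP ≤ dualPotential p r qP τP :=
            dualPotential_le_of_sum_mul_le hcone
        _ = dualPotential p r qP' τP' := by linarith
    have hq : qP = qP' := funext fun j => by rw [hmomentP, hmomentP', hτ]
    exact hq ▸ hqP'
  · linarith [dualPotential_of_moment_le_of_sum_mul_le hp.le hr hmomentP (hconeP' qP hmem)]

/-- monotonicity of the decay function: For convex polytopes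
`P' ⊆ P ⊆ pΣ` not contained in `∂(pΣ)` and `z ∈ (ℂ*)ᵐ`, with
`b_Q(z) = −⟨q_Q(z), τ_Q(z)⟩ + p log((1+‖z‖²)/(1+‖e^{−τ_Q(z)/2}·z‖²))`, one has
`b_{P'}(z) ≥ b_P(z)`, with equality iff `q_P(z) ∈ P'`. -/
theorem decay_function_monotone (m : ℕ) (p : ℝ) (hp : 0 < p)
    (V V' : Finset (Fin m → ℝ)) (hV : V.Nonempty) (hV' : V'.Nonempty)
    (P P' : Set (Fin m → ℝ))
    (hP : P = convexHull ℝ (V : Set (Fin m → ℝ)))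
    (hP' : P' = convexHull ℝ (V' : Set (Fin m → ℝ)))
    (hsub : P' ⊆ P)
    (hPS : P ⊆ {x | (∀ j, 0 ≤ x j) ∧ ∑ j, x j ≤ p})
    (hPbd : ¬ P ⊆ frontier {x : Fin m → ℝ | (∀ j, 0 ≤ x j) ∧ ∑ j, x j ≤ p})
    (hP'bd : ¬ P' ⊆ frontier {x : Fin m → ℝ | (∀ j, 0 ≤ x j) ∧ ∑ j, x j ≤ p})
    (z : Fin m → ℂ) (hz : ∀ j, z j ≠ 0)
    (qP τP qP' τP' : Fin m → ℝ)
    (hqP : qP ∈ P) (hqP' : qP' ∈ P')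
    -- `p μ(e^{−τ/2}·z) = q` for each polytope:
    (hμP : ∀ j, p * (‖Complex.exp (-(τP j : ℂ) / 2) * z j‖ ^ 2 /
        (1 + ∑ k, ‖Complex.exp (-(τP k : ℂ) / 2) * z k‖ ^ 2)) = qP j)
    (hμP' : ∀ j, p * (‖Complex.exp (-(τP' j : ℂ) / 2) * z j‖ ^ 2 /
        (1 + ∑ k, ‖Complex.exp (-(τP' k : ℂ) / 2) * z k‖ ^ 2)) = qP' j)
    -- `τ` lies in the normal cone at `q`:
    (hconeP : ∀ y ∈ P, ∑ j, τP j * y j ≤ ∑ j, τP j * qP j)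
    (hconeP' : ∀ y ∈ P', ∑ j, τP' j * y j ≤ ∑ j, τP' j * qP' j)
    (bP bP' : ℝ)
    (hbP : bP = -(∑ j, qP j * τP j) + p * Real.log ((1 + ∑ j, ‖z j‖ ^ 2) /
        (1 + ∑ j, ‖Complex.exp (-(τP j : ℂ) / 2) * z j‖ ^ 2)))
    (hbP' : bP' = -(∑ j, qP' j * τP' j) + p * Real.log ((1 + ∑ j, ‖z j‖ ^ 2) /
        (1 + ∑ j, ‖Complex.exp (-(τP' j : ℂ) / 2) * z j‖ ^ 2))) :
    bP ≤ bP' ∧ (bP' = bP ↔ qP ∈ P') :=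
  decay_function_monotone_general m p hp P P' hsub z hz qP τP qP' τP' hqP' hμP hμP' hconeP hconeP'
    bP bP' hbP hbP'
end
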